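/- arXiv:1807.09109 — 2 statements merged into one kernel-verified Lean document; each statement's English description precedes it below -/
import Mathlib

section
/- Let c₁ ≥ 1, q ∈ (0,1], d ∈ ℕ, γ ∈ (0,1), and let τ ∈ (0,1) satisfy 2c₁τ^{2(1−γ)} ≤ 1, and δ₁ > 0 satisfy (min{c₁√δ₁, 1})^q ≤ τ^d. If ψ : ℕ → [0,∞) satisfies ψ(0) ≤ δ₁ and ψ(k+1) ≤ c₁·(1 + (min{c₁·ψ(k)^{1/2}, 1})^q·τ^{−d})·τ²·ψ(k) for all k ∈ ℕ, then ψ(k) ≤ τ^{2γk}·ψ(0) for all k ∈ ℕ. -/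
/-!
As long as `ψ k ≤ δ₁`, the smallness condition on `δ₁` makes the bracket
`1 + (min (c₁ √ψ k) 1) ^ q τ ^ (-d)` at most `2`, so `ψ (k+1) ≤ 2 c₁ τ² ψ k ≤ τ ^ (2γ) ψ k`
by the choice of `τ`. Since `τ ^ (2γ) ≤ 1`, the sequence then stays below `ψ 0 ≤ δ₁`,
and induction gives the geometric decay.
-/

open Real

theorem le_pow_mul_of_contraction_below {ψ : ℕ → ℝ} {ρ s : ℝ} (hρ0 : 0 ≤ ρ) (hρ1 : ρ ≤ 1)
    (hψ : ∀ k, 0 ≤ ψ k) (hψs : ψ 0 ≤ s) (hstep : ∀ k, ψ k ≤ s → ψ (k + 1) ≤ ρ * ψ k) :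
    ∀ k, ψ k ≤ ρ ^ k * ψ 0 := by
  intro k
  induction k with
  | zero => simp
  | succ k ih =>
    have hψk : ψ k ≤ s := ih.trans <| (mul_le_of_le_one_left (hψ 0) (pow_le_one₀ hρ0 hρ1)).trans hψs
    calc ψ (k + 1) ≤ ρ * ψ k := hstep k hψk
      _ ≤ ρ * (ρ ^ k * ψ 0) := mul_le_mul_of_nonneg_left ih hρ0
      _ = ρ ^ (k + 1) * ψ 0 := by ring

theorem min_mul_sqrt_rpow_mul_rpow_neg_le_one {c q τ e t δ : ℝ} (hc : 0 ≤ c) (hq : 0 ≤ q)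
    (hτ : 0 < τ) (ht : t ≤ δ) (hδ : (min (c * √δ) 1) ^ q ≤ τ ^ e) :
    (min (c * √t) 1) ^ q * τ ^ (-e) ≤ 1 := by
  rw [rpow_neg hτ.le, ← div_eq_mul_inv, div_le_one (rpow_pos_of_pos hτ e)]
  refine (rpow_le_rpow (by positivity) ?_ hq).trans hδ
  exact min_le_min_right 1 (mul_le_mul_of_nonneg_left (sqrt_le_sqrt ht) hc)

theorem two_mul_mul_rpow_two_le_rpow {c τ γ : ℝ} (hτ : 0 < τ)
    (hτc : 2 * c * τ ^ (2 * (1 - γ)) ≤ 1) : 2 * c * τ ^ (2 : ℝ) ≤ τ ^ (2 * γ) := by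
  have hsplit : τ ^ (2 : ℝ) = τ ^ (2 * (1 - γ)) * τ ^ (2 * γ) := by
    rw [← rpow_add hτ]; ring_nf
  rw [hsplit, ← mul_assoc]
  exact mul_le_of_le_one_left (rpow_pos_of_pos hτ _).le hτc

theorem statement_14_general
    (c₁ q : ℝ) (hc₁ : 1 ≤ c₁) (hq : q ∈ Set.Ioc (0:ℝ) 1)
    (d : ℕ) (γ τ δ₁ : ℝ) (hγ : γ ∈ Set.Ioo (0:ℝ) 1) (hτ : τ ∈ Set.Ioo (0:ℝ) 1)
    (hτc : 2 * c₁ * τ ^ (2 * (1 - γ)) ≤ 1)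
    (hδ : (min (c₁ * Real.sqrt δ₁) 1) ^ q ≤ τ ^ (d : ℝ))
    (ψ : ℕ → ℝ) (hψ0 : ∀ k, 0 ≤ ψ k) (hψinit : ψ 0 ≤ δ₁)
    (hrec : ∀ k : ℕ, ψ (k+1) ≤
      c₁ * (1 + (min (c₁ * Real.sqrt (ψ k)) 1) ^ q * τ ^ (-(d : ℝ))) * τ ^ (2:ℝ) * ψ k) :
    ∀ k : ℕ, ψ k ≤ τ ^ (2 * γ * (k : ℝ)) * ψ 0 := by
  obtain ⟨hτ0, hτ1⟩ := hτ
  have hstep : ∀ k, ψ k ≤ δ₁ → ψ (k + 1) ≤ τ ^ (2 * γ) * ψ k := by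
    intro k hk
    have hbracket := min_mul_sqrt_rpow_mul_rpow_neg_le_one (by linarith) hq.1.le hτ0 hk hδ
    calc ψ (k + 1) ≤ _ := hrec k
      _ ≤ 2 * c₁ * τ ^ (2 : ℝ) * ψ k := by
        have hfactor : c₁ * (1 + (min (c₁ * √(ψ k)) 1) ^ q * τ ^ (-(d : ℝ))) ≤ 2 * c₁ := by nlinarith
        exact mul_le_mul_of_nonneg_right (mul_le_mul_of_nonneg_right hfactor (by positivity)) (hψ0 k)
      _ ≤ τ ^ (2 * γ) * ψ k :=
        mul_le_mul_of_nonneg_right (two_mul_mul_rpow_two_le_rpow hτ0 hτc) (hψ0 k)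
  intro k
  have hρ1 : τ ^ (2 * γ) ≤ 1 := rpow_le_one hτ0.le hτ1.le (by linarith [hγ.1])
  calc ψ k ≤ (τ ^ (2 * γ)) ^ k * ψ 0 :=
        le_pow_mul_of_contraction_below (rpow_pos_of_pos hτ0 _).le hρ1 hψ0 hψinit hstep k
    _ = τ ^ (2 * γ * (k : ℝ)) * ψ 0 := by rw [← rpow_natCast, ← rpow_mul hτ0.le]

/-- the abstract iteration underlying the Morrey-decay estimate,
Step 2 of the proof of Proposition 1.10. -/
theorem statement_14
    (c₁ q : ℝ) (hc₁ : 1 ≤ c₁) (hq : q ∈ Set.Ioc (0:ℝ) 1)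
    (d : ℕ) (γ τ δ₁ : ℝ) (hγ : γ ∈ Set.Ioo (0:ℝ) 1) (hτ : τ ∈ Set.Ioo (0:ℝ) 1)
    (hτc : 2 * c₁ * τ ^ (2 * (1 - γ)) ≤ 1)
    (hδ₁ : 0 < δ₁) (hδ : (min (c₁ * Real.sqrt δ₁) 1) ^ q ≤ τ ^ (d : ℝ))
    (ψ : ℕ → ℝ) (hψ0 : ∀ k, 0 ≤ ψ k) (hψinit : ψ 0 ≤ δ₁)
    (hrec : ∀ k : ℕ, ψ (k+1) ≤
      c₁ * (1 + (min (c₁ * Real.sqrt (ψ k)) 1) ^ q * τ ^ (-(d : ℝ))) * τ ^ (2:ℝ) * ψ k) :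
    ∀ k : ℕ, ψ k ≤ τ ^ (2 * γ * (k : ℝ)) * ψ 0 :=
  statement_14_general c₁ q hc₁ hq d γ τ δ₁ hγ hτ hτc hδ ψ hψ0 hψinit hrec
end

section
/- Let σ ∈ (0,1), c₂ ≥ 1, N ≥ 0, H ≥ 0 and θ ≥ 0 with θ ≤ (1−σ)/(2c₂). Let (a_k)_{k≥0} and (b_k)_{k≥0} be sequences of nonnegative real numbers with a₀ ≤ N, b₀ ≤ N, and assume that for all k ≥ 0: a_{k+1} ≤ (1/2)a_k + (1/4)θσ^k(b_k + H), and b_{k+1} ≤ c₂(N + θ·Σ_{i=0}^{k−1} σ^i(b_i + H)) (the sum being empty for k = 0). Then for all k ≥ 0: b_k ≤ 2c₂(N + H), and a_{k+1} ≤ 2^{−(k+1)}N + (1/2)(Σ_{i=0}^{k} σ^i)(N + H). -/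
/-- the abstract double-sequence iteration, Step 3 of the proof of
Proposition 1.12. -/
theorem statement_15
    (σ c₂ N H θ : ℝ) (hσ : σ ∈ Set.Ioo (0:ℝ) 1) (hc₂ : 1 ≤ c₂)
    (hN : 0 ≤ N) (hH : 0 ≤ H) (hθ0 : 0 ≤ θ) (hθ : θ ≤ (1 - σ) / (2 * c₂))
    (a b : ℕ → ℝ) (ha0 : ∀ k, 0 ≤ a k) (hb0 : ∀ k, 0 ≤ b k)
    (hainit : a 0 ≤ N) (hbinit : b 0 ≤ N)
    (hreca : ∀ k : ℕ, a (k+1) ≤ (1/2) * a k + (1/4) * θ * σ ^ k * (b k + H))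
    (hrecb : ∀ k : ℕ, b (k+1) ≤
      c₂ * (N + θ * ∑ i ∈ Finset.range k, σ ^ i * (b i + H))) :
    (∀ k : ℕ, b k ≤ 2 * c₂ * (N + H)) ∧
    (∀ k : ℕ, a (k+1) ≤
      (1/2) ^ (k+1) * N + (1/2) * (∑ i ∈ Finset.range (k+1), σ ^ i) * (N + H)) := by
  obtain ⟨hσ0, hσ1⟩ := hσ
  have hc0 : (0:ℝ) < c₂ := lt_of_lt_of_le one_pos hc₂
  have h1σ : 0 < 1 - σ := by linarith
  have hNH : 0 ≤ N + H := by linarith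
  have hθc : 2 * c₂ * θ ≤ 1 - σ := by
    have := (le_div_iff₀ (by positivity : (0:ℝ) < 2 * c₂)).mp hθ
    linarith
  have hθhalf : θ ≤ 1/2 := by nlinarith
  -- geometric sum bound
  have hgeom : ∀ n : ℕ, (1 - σ) * ∑ i ∈ Finset.range n, σ ^ i ≤ 1 := by
    intro n
    have h := geom_sum_mul σ n
    nlinarith [pow_nonneg hσ0.le n]
  have hSnn : ∀ n : ℕ, 0 ≤ ∑ i ∈ Finset.range n, σ ^ i := by
    intro n
    exact Finset.sum_nonneg fun i _ => pow_nonneg hσ0.le i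
  -- bound on b
  have hb : ∀ k, b k ≤ 2 * c₂ * (N + H) := by
    intro k
    induction k using Nat.strong_induction_on with
    | _ k ih =>
      cases k with
      | zero => nlinarith
      | succ k =>
        set S := ∑ i ∈ Finset.range k, σ ^ i with hSdef
        have hS : ∑ i ∈ Finset.range k, σ ^ i * (b i + H)
            ≤ (2 * c₂ * (N + H) + H) * S := by
          rw [hSdef, Finset.mul_sum]
          apply Finset.sum_le_sum
          intro i hi
          have hbi := ih i (Nat.lt_succ_of_lt (Finset.mem_range.mp hi))
          nlinarith [pow_nonneg hσ0.le i]
        have hgS := hgeom k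
        have hSnn' := hSnn k
        have hC : 0 ≤ 2 * c₂ * (N + H) + H := by positivity
        -- 2*c₂*θ*S ≤ (1-σ)*S ≤ 1
        have h1 : 2 * c₂ * (θ * S) ≤ 1 := by
          nlinarith [mul_le_mul_of_nonneg_right hθc hSnn']
        -- θ * T ≤ θ * (C * S)
        have h2 : θ * ∑ i ∈ Finset.range k, σ ^ i * (b i + H)
            ≤ θ * ((2 * c₂ * (N + H) + H) * S) :=
          mul_le_mul_of_nonneg_left hS hθ0
        -- 2*c₂*(θ*(C*S)) ≤ C
        have h3 : 2 * c₂ * (θ * ((2 * c₂ * (N + H) + H) * S))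
            ≤ 2 * c₂ * (N + H) + H := by
          nlinarith [mul_nonneg hC (by linarith : (0:ℝ) ≤ 1 - 2 * c₂ * (θ * S))]
        have h4 : θ * ∑ i ∈ Finset.range k, σ ^ i * (b i + H) ≤ N + 2 * H := by
          nlinarith [mul_le_mul_of_nonneg_left h2 (by linarith : (0:ℝ) ≤ 2 * c₂)]
        have h5 := hrecb k
        nlinarith
  -- key: θ*(b k + H) ≤ 2*(N+H)
  have hkey : ∀ k, θ * (b k + H) ≤ 2 * (N + H) := by
    intro k
    nlinarith [mul_le_mul_of_nonneg_left (hb k) hθ0,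
      mul_le_mul_of_nonneg_right hθc hNH,
      mul_le_mul_of_nonneg_right hθhalf hH]
  refine ⟨hb, ?_⟩
  intro k
  induction k with
  | zero =>
    have h := hreca 0
    have hk := hkey 0
    norm_num [Finset.sum_range_one]
    nlinarith
  | succ k ih =>
    have h := hreca (k+1)
    have hk := hkey (k+1)
    have hσk : (0:ℝ) ≤ σ ^ (k+1) := pow_nonneg hσ0.le (k+1)
    have hmul : (1/4) * θ * σ ^ (k+1) * (b (k+1) + H)
        ≤ (1/2) * σ ^ (k+1) * (N + H) := by
      nlinarith [mul_le_mul_of_nonneg_left (hkey (k+1)) (by positivity : (0:ℝ) ≤ (1/4) * σ ^ (k+1))]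
    rw [Finset.sum_range_succ, pow_succ]
    have hSnn' := hSnn (k+1)
    have hSNH : 0 ≤ (∑ i ∈ Finset.range (k+1), σ ^ i) * (N + H) :=
      mul_nonneg hSnn' hNH
    have ih2 := mul_le_mul_of_nonneg_left ih (by norm_num : (0:ℝ) ≤ 1/2)
    generalize hSg : (∑ i ∈ Finset.range (k+1), σ ^ i) = S at ih ih2 hSNH ⊢
    generalize hpg : ((1:ℝ)/2) ^ (k+1) = p at ih ih2 ⊢
    generalize hqg : (σ:ℝ) ^ (k+1) = q at h hmul ⊢
    clear hreca hrecb hgeom hSnn hb hkey ha0 hb0 hainit hbinit hθ hθc hθhalf hk hSnn' ih hSg hpg hqg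
    linarith [h, ih2, hmul, hSNH]
end
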